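/- arXiv:cs/0508091 — 8 statements merged into one kernel-verified Lean document; each statement's English description precedes it below -/
import Mathlib

section
/- If I₁ and I₂ are models of the fuzzy program P, then their pointwise meet I₁ ⊓ I₂, defined by (I₁ ⊓ I₂)(a) = I₁(a) ⊓ I₂(a), is again a model of P (model intersection property). -/
/-- A fuzzy clause: a head atom, a finite tuple of body atoms, and an
aggregation operator over truth values. -/
structure FuzzyClause (A : Type*) (L : Type*) where
  n : ℕ
  head : A
  body : Fin n → A
  agg : (Fin n → L) → L

/-- A fuzzy program: a set of facts and a set of clauses whose aggregation
operators are monotone (w.r.t. the pointwise order on argument tuples). -/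
structure FuzzyProgram (A : Type*) (L : Type*) [CompleteLattice L] where
  facts : Set (A × L)
  clauses : Set (FuzzyClause A L)
  agg_mono : ∀ c ∈ clauses, Monotone c.agg

variable {A : Type*} {L : Type*} [CompleteLattice L]

/-- `I` is a model of `P` with default assignment `d`. -/
def IsModel (d : A → L) (P : FuzzyProgram A L) (I : A → L) : Prop :=
  (∀ a, d a ≤ I a) ∧
  (∀ p ∈ P.facts, p.2 ≤ I p.1) ∧
  (∀ c ∈ P.clauses, c.agg (fun i => I (c.body i)) ≤ I c.head)

/-- The immediate-consequence operator `T_P`. -/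
def TP (d : A → L) (P : FuzzyProgram A L) (I : A → L) : A → L :=
  fun a =>
    d a ⊔ sSup {v | (a, v) ∈ P.facts} ⊔
      sSup {w | ∃ c ∈ P.clauses, c.head = a ∧ w = c.agg (fun i => I (c.body i))}

/-- Model intersection property: the pointwise meet of two models of a fuzzy
program `P` is again a model of `P`. -/
theorem model_intersection (d : A → L) (P : FuzzyProgram A L) (I₁ I₂ : A → L)
    (h₁ : IsModel d P I₁) (h₂ : IsModel d P I₂) :
    IsModel d P (I₁ ⊓ I₂) := by
  obtain ⟨d₁, f₁, c₁⟩ := h₁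
  obtain ⟨d₂, f₂, c₂⟩ := h₂
  refine ⟨fun a => le_inf (d₁ a) (d₂ a), fun p hp => le_inf (f₁ p hp) (f₂ p hp), fun c hc => ?_⟩
  refine le_inf (le_trans ?_ (c₁ c hc)) (le_trans ?_ (c₂ c hc)) <;>
    exact P.agg_mono c hc (fun i => by simp [Pi.inf_apply])
end

section
/- The least model of the fuzzy program P equals the least fixed point of the immediate-consequence operator T_P: lm(P) = lfp(T_P), where lm(P) is the pointwise infimum of all models of P and lfp(T_P) is the Knaster–Tarski least fixed point of the monotone operator T_P on the complete lattice of interpretations. -/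
variable {A : Type*} {L : Type*} [CompleteLattice L]

/-! Models of `P` are exactly the prefixed points of `T_P`, and the Knaster–Tarski least fixed
point is the infimum of the prefixed points. -/

theorem TP_apply_le_iff (d : A → L) (P : FuzzyProgram A L) (I : A → L) (a : A) :
    TP d P I a ≤ I a ↔ d a ≤ I a ∧ (∀ v, (a, v) ∈ P.facts → v ≤ I a) ∧
      ∀ c ∈ P.clauses, c.head = a → c.agg (fun i => I (c.body i)) ≤ I a := by
  simp only [TP, sup_le_iff, sSup_le_iff, Set.mem_ofPred_eq, forall_exists_index, and_imp]
  constructor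
  · rintro ⟨⟨hd, hf⟩, hc⟩
    exact ⟨hd, hf, fun c hc' hca => hc _ c hc' hca rfl⟩
  · rintro ⟨hd, hf, hc⟩
    exact ⟨⟨hd, hf⟩, fun _ c hc' hca hw => hw ▸ hc c hc' hca⟩

theorem TP_le_iff_isModel (d : A → L) (P : FuzzyProgram A L) (I : A → L) :
    TP d P I ≤ I ↔ IsModel d P I := by
  simp only [Pi.le_def, TP_apply_le_iff, forall_and, IsModel, Prod.forall]
  refine and_congr_right' (and_congr_right' ⟨fun h c hc => h c.head c hc rfl, ?_⟩)
  rintro h a c hc rfl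
  exact h c hc

/-- The least model of `P` (the pointwise infimum of all models) equals the
Knaster–Tarski least fixed point of the immediate-consequence operator `T_P`. -/
theorem least_model_eq_lfp (d : A → L) (P : FuzzyProgram A L)
    (hm : Monotone (TP d P)) :
    (fun a => ⨅ I ∈ {I : A → L | IsModel d P I}, I a) =
      OrderHom.lfp ⟨TP d P, hm⟩ := by
  have hmodels : {I | IsModel d P I} = {I | TP d P I ≤ I} :=
    Set.ext fun I => (TP_le_iff_isModel d P I).symm
  rw [hmodels, ← (OrderHom.isLeast_lfp_le _).isGLB.sInf_eq, sInf_eq_iInf]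
  ext a
  simp only [iInf_apply]
  rfl
end

section
/- If every aggregation operator occurring in the clauses of P is Scott-continuous, then the immediate-consequence operator T_P is Scott-continuous on interpretations: for every nonempty directed set D of interpretations (directed in the pointwise order), T_P(⨆ D) = ⨆_{I ∈ D} T_P(I). -/
variable {A : Type*} {L : Type*} [CompleteLattice L]

/-- An aggregation operator is Scott-continuous if it preserves suprema of
nonempty directed sets of argument tuples (pointwise order). -/
def ScottContinuous' {n : ℕ} (F : (Fin n → L) → L) : Prop :=
  ∀ S : Set (Fin n → L), S.Nonempty → DirectedOn (· ≤ ·) S →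
    F (sSup S) = ⨆ x ∈ S, F x

/-
The only summand of `T_P` that depends on `I` is the supremum of the aggregated clause
bodies. A clause reads `I` through the restriction `I ↦ I ∘ body`, which commutes with
suprema, so a Scott-continuous aggregation turns the supremum over `D` inside into one
outside; the default value and the facts do not depend on `I` at all. The reverse
inequality is monotonicity.
-/

theorem sSup_image_comp_right {α β γ : Type*} [CompleteLattice γ] (f : α → β) (D : Set (β → γ)) :
    sSup ((· ∘ f) '' D) = sSup D ∘ f := by
  ext i
  rw [sSup_image, Function.comp_apply, sSup_eq_iSup (s := D)]
  simp only [iSup_apply, Function.comp_apply]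

theorem ScottContinuous'.map_sSup_comp {n : ℕ} {F : (Fin n → L) → L} (hF : ScottContinuous' F)
    (b : Fin n → A) {D : Set (A → L)} (hne : D.Nonempty) (hdir : DirectedOn (· ≤ ·) D) :
    F (sSup D ∘ b) = ⨆ I ∈ D, F (I ∘ b) := by
  have hdir' : DirectedOn (· ≤ ·) ((· ∘ b) '' D) :=
    hdir.mono_comp fun _ _ hIJ i => hIJ (b i)
  rw [← sSup_image_comp_right, hF _ (hne.image _) hdir', iSup_image]

namespace TP

variable (d : A → L) (P : FuzzyProgram A L)

theorem default_sup_facts_le (I : A → L) (a : A) :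
    d a ⊔ sSup {v | (a, v) ∈ P.facts} ≤ TP d P I a :=
  le_sup_left

theorem agg_le {c : FuzzyClause A L} (hc : c ∈ P.clauses) (I : A → L) :
    c.agg (fun i => I (c.body i)) ≤ TP d P I c.head :=
  le_sup_of_le_right (le_sSup ⟨c, hc, rfl, rfl⟩)

theorem le_of_forall_clause {I : A → L} {a : A} {x : L}
    (hbase : d a ⊔ sSup {v | (a, v) ∈ P.facts} ≤ x)
    (hclause : ∀ c ∈ P.clauses, c.head = a → c.agg (fun i => I (c.body i)) ≤ x) :
    TP d P I a ≤ x :=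
  sup_le hbase <| sSup_le <| by
    rintro w ⟨c, hc, rfl, rfl⟩
    exact hclause c hc rfl

theorem monotone : Monotone (TP d P) := by
  intro I J hIJ a
  refine le_of_forall_clause d P (default_sup_facts_le d P J a) ?_
  rintro c hc rfl
  exact (P.agg_mono c hc fun i => hIJ (c.body i)).trans (agg_le d P hc J)

end TP

/-- If every aggregation operator occurring in the clauses of `P` is
Scott-continuous, then `T_P` is Scott-continuous on interpretations. -/
theorem TP_scott_continuous (d : A → L) (P : FuzzyProgram A L)
    (hsc : ∀ c ∈ P.clauses, ScottContinuous' c.agg) :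
    ∀ D : Set (A → L), D.Nonempty → DirectedOn (· ≤ ·) D →
      TP d P (sSup D) = ⨆ I ∈ D, TP d P I := by
  intro D hne hdir
  refine le_antisymm (fun a => ?_) (TP.monotone d P).le_map_sSup
  simp only [iSup_apply]
  refine TP.le_of_forall_clause d P ?_ ?_
  · obtain ⟨I₀, hI₀⟩ := hne
    exact le_iSup₂_of_le I₀ hI₀ (TP.default_sup_facts_le d P I₀ a)
  · rintro c hc rfl
    rw [← Function.comp_def, (hsc c hc).map_sSup_comp c.body hne hdir]
    exact iSup₂_mono fun I _ => TP.agg_le d P hc I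
end

section
/- If every aggregation operator occurring in the clauses of P is Scott-continuous, then the least fixed point of T_P is reached at the first infinite ordinal: lfp(T_P) = ⨆_{n ∈ ℕ} T_Pⁿ(⊥), where ⊥ is the bottom interpretation (⊥(a) = ⊥ for all a) and T_Pⁿ denotes n-fold iteration of T_P. -/
variable {A : Type*} {L : Type*} [CompleteLattice L]

/-- Kleene: if every aggregation operator of `P` is Scott-continuous, the
least fixed point of `T_P` is reached at the first infinite ordinal, i.e. it
is the supremum of the finite iterates of `T_P` starting from the bottom
interpretation. -/
theorem lfp_eq_iSup_iterate (d : A → L) (P : FuzzyProgram A L)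
    (hsc : ∀ c ∈ P.clauses, ScottContinuous' c.agg)
    (hm : Monotone (TP d P)) :
    OrderHom.lfp ⟨TP d P, hm⟩ = ⨆ n : ℕ, (TP d P)^[n] ⊥ := by
  set c : ℕ → (A → L) := fun n => (TP d P)^[n] ⊥ with hc
  have hsucc : ∀ n, c (n + 1) = TP d P (c n) := by
    intro n; simp [hc, Function.iterate_succ_apply']
  have hchain : Monotone c := by
    apply monotone_nat_of_le_succ
    intro n
    induction n with
    | zero => exact bot_le
    | succ k ih =>
      rw [hsucc, hsucc]
      exact hm ih
  set s : A → L := ⨆ n, c n with hs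
  have hle : ∀ n, c n ≤ s := fun n => le_iSup c n
  have key : ∀ cl ∈ P.clauses, cl.agg (fun i => s (cl.body i))
      = ⨆ n, cl.agg (fun i => c n (cl.body i)) := by
    intro cl hcl
    have hmg : Monotone (fun n => fun i => c n (cl.body i)) := by
      intro n m hnm i
      exact hchain hnm _
    have hS : (fun i => s (cl.body i))
        = sSup (Set.range fun n => fun i => c n (cl.body i)) := by
      funext i
      rw [sSup_range, iSup_apply]
      simp [hs, iSup_apply]
    rw [hS, hsc cl hcl _ (Set.range_nonempty _)
      (hmg.directed_le.directedOn_range), iSup_range]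
  apply le_antisymm
  · apply OrderHom.lfp_le
    intro a
    show TP d P s a ≤ s a
    have h1 : d a ⊔ sSup {v | (a, v) ∈ P.facts} ≤ c 1 a := by
      rw [hsucc 0]
      exact le_sup_left
    apply sup_le (h1.trans (hle 1 a))
    apply sSup_le
    rintro w ⟨cl, hcl, hhead, rfl⟩
    rw [key cl hcl]
    apply iSup_le
    intro n
    have : cl.agg (fun i => c n (cl.body i)) ≤ c (n + 1) a := by
      rw [hsucc n]
      refine le_trans (le_sSup ?_) le_sup_right
      exact ⟨cl, hcl, hhead, rfl⟩
    exact this.trans (hle (n + 1) a)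
  · apply iSup_le
    intro n
    induction n with
    | zero => exact bot_le
    | succ k ih =>
      rw [hsucc]
      calc TP d P (c k) ≤ TP d P (OrderHom.lfp ⟨TP d P, hm⟩) := hm ih
        _ = OrderHom.lfp ⟨TP d P, hm⟩ := OrderHom.map_lfp ⟨TP d P, hm⟩
end

section
/- Soundness of derivations: for every atom a ∈ A and truth value v ∈ L, if Prov(a, v) holds, then v ≤ lfp(T_P)(a), where lfp(T_P) is the least fixed point of the immediate-consequence operator T_P. -/
variable {A : Type*} {L : Type*} [CompleteLattice L]

/-- The derivability relation: the least relation closed under the fact,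
clause and default rules. -/
inductive Prov (d : A → L) (P : FuzzyProgram A L) : A → L → Prop
  | fact (a : A) (v : L) : (a, v) ∈ P.facts → Prov d P a v
  | clause (c : FuzzyClause A L) (hc : c ∈ P.clauses) (w : Fin c.n → L) :
      (∀ i, Prov d P (c.body i) (w i)) → Prov d P c.head (c.agg w)
  | dflt (a : A) : Prov d P a (d a)

/-- Soundness of derivations: every derivable truth value is below the least
fixed point of `T_P`. -/
theorem prov_sound (d : A → L) (P : FuzzyProgram A L)
    (hm : Monotone (TP d P)) :
    ∀ (a : A) (v : L), Prov d P a v → v ≤ OrderHom.lfp ⟨TP d P, hm⟩ a := by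
  set I := OrderHom.lfp ⟨TP d P, hm⟩ with hI
  have hfix : TP d P I = I := OrderHom.map_lfp ⟨TP d P, hm⟩
  intro a v h
  induction h with
  | fact a v hav =>
      calc v ≤ sSup {v | (a, v) ∈ P.facts} := le_sSup hav
        _ ≤ TP d P I a := le_trans le_sup_right le_sup_left
        _ = I a := congrFun hfix a
  | clause c hc w _ ih =>
      have h1 : c.agg w ≤ c.agg (fun i => I (c.body i)) :=
        P.agg_mono c hc (fun i => ih i)
      calc c.agg w ≤ c.agg (fun i => I (c.body i)) := h1
        _ ≤ sSup {w | ∃ c' ∈ P.clauses, c'.head = c.head ∧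
              w = c'.agg (fun i => I (c'.body i))} := le_sSup ⟨c, hc, rfl, rfl⟩
        _ ≤ TP d P I c.head := le_sup_right
        _ = I c.head := congrFun hfix c.head
  | dflt a =>
      calc d a ≤ TP d P I a := le_trans le_sup_left le_sup_left
        _ = I a := congrFun hfix a
end

section
/- Depth-bounded soundness of breadth-first derivations: for every n ∈ ℕ, every atom a ∈ A and every truth value v ∈ L, if Provₙ(a, v) holds then v ≤ T_Pⁿ(⊥)(a), where ⊥ is the bottom interpretation (⊥(a) = ⊥ for all a) and T_Pⁿ denotes n-fold iteration of the immediate-consequence operator T_P. -/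
variable {A : Type*} {L : Type*} [CompleteLattice L]

/-- Depth-bounded derivability: `ProvN d P n a v` means `v` is derivable for
`a` by a breadth-first derivation of depth at most `n`. -/
def ProvN (d : A → L) (P : FuzzyProgram A L) : ℕ → A → L → Prop
  | 0 => fun _ _ => False
  | n + 1 => fun a v =>
      (a, v) ∈ P.facts ∨ v = d a ∨
        ∃ c ∈ P.clauses, c.head = a ∧
          ∃ w : Fin c.n → L, (∀ i, ProvN d P n (c.body i) (w i)) ∧ v = c.agg w

/-- Depth-bounded soundness: a value derivable in depth `n` is below the
`n`-th iterate of `T_P` on the bottom interpretation. -/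
theorem provN_sound (d : A → L) (P : FuzzyProgram A L) :
    ∀ (n : ℕ) (a : A) (v : L), ProvN d P n a v → v ≤ (TP d P)^[n] ⊥ a := by
  intro n
  induction n with
  | zero => intro a v h; exact h.elim
  | succ n ih =>
    intro a v h
    rw [Function.iterate_succ_apply']
    rcases h with hf | hd | ⟨c, hc, hh, w, hw, hv⟩
    · exact le_sup_of_le_left (le_sup_of_le_right (le_sSup hf))
    · exact le_sup_of_le_left (le_sup_of_le_left hd.le)
    · refine le_sup_of_le_right (le_trans ?_ (le_sSup ⟨c, hc, hh, rfl⟩))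
      rw [hv]
      exact P.agg_mono c hc fun i => ih _ _ (hw i)
end

section
/- Let n ∈ ℕ, let l, u : Fin n → ℝ with l ≤ u pointwise, and let B = Set.pi univ (fun i => Icc(l i, u i)) be the corresponding box in Fin n → ℝ. If f : (Fin n → ℝ) → ℝ is continuous on B and monotone on B (i.e. for x, y ∈ B with x ≤ y pointwise, f(x) ≤ f(y)), then the image of B under f is exactly the closed interval Icc(f(l), f(u)). -/
/-- Nguyen–Walker extension result: the image of the box
`∏ i, [l i, u i]` under a function `f` that is continuous and monotone on the
box is exactly the closed interval `[f l, f u]`. -/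
theorem image_box_eq_Icc (n : ℕ) (l u : Fin n → ℝ) (hlu : l ≤ u)
    (f : (Fin n → ℝ) → ℝ)
    (hcont : ContinuousOn f (Set.pi Set.univ fun i => Set.Icc (l i) (u i)))
    (hmono : ∀ x ∈ Set.pi Set.univ fun i => Set.Icc (l i) (u i),
             ∀ y ∈ Set.pi Set.univ fun i => Set.Icc (l i) (u i),
             x ≤ y → f x ≤ f y) :
    f '' (Set.pi Set.univ fun i => Set.Icc (l i) (u i)) =
      Set.Icc (f l) (f u) := by
  set B := Set.pi Set.univ fun i => Set.Icc (l i) (u i) with hB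
  have hlB : l ∈ B := fun i _ => ⟨le_refl _, hlu i⟩
  have huB : u ∈ B := fun i _ => ⟨hlu i, le_refl _⟩
  have hconv : Convex ℝ B := convex_pi fun i _ => convex_Icc _ _
  have hpre : IsPreconnected (f '' B) :=
    (hconv.isPreconnected).image f hcont
  apply Set.Subset.antisymm
  · rintro _ ⟨x, hx, rfl⟩
    exact ⟨hmono l hlB x hx (fun i => (hx i (Set.mem_univ i)).1),
           hmono x hx u huB (fun i => (hx i (Set.mem_univ i)).2)⟩
  · exact hpre.Icc_subset ⟨l, hlB, rfl⟩ ⟨u, huB, rfl⟩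
end

section
/- Closure of Borel truth values under union-aggregation: let n ∈ ℕ and let f : (Fin n → ℝ) → ℝ be continuous and monotone (with respect to the pointwise order) on the unit box [0,1]ⁿ, with f mapping the unit box into [0,1]. For each i, let Bᵢ ⊆ [0,1] be a nonempty finite union of nonempty closed intervals Bᵢ = ⋃_{j ∈ Jᵢ} Icc(lᵢⱼ, uᵢⱼ) with Jᵢ finite and lᵢⱼ ≤ uᵢⱼ. Then the image f '' (Set.pi univ (fun i => Bᵢ)) equals the union, over all choices (j₁,…,jₙ) ∈ J₁ × ⋯ × Jₙ, of the closed intervals Icc(f(l₁ⱼ₁,…,lₙⱼₙ), f(u₁ⱼ₁,…,uₙⱼₙ)); in particular this image is again a nonempty finite union of nonempty closed intervals contained in [0,1]. -/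
/-- Closure of Borel truth values under union-aggregation: if `f` is
continuous and monotone on the unit box `[0,1]ⁿ` and maps it into `[0,1]`,
and each `Bᵢ = ⋃ j : J i, [l i j, u i j]` is a nonempty finite union of
nonempty closed subintervals of `[0,1]`, then the image of the product
`∏ i, Bᵢ` under `f` is the union, over all choices `jv` of constituent
intervals, of the closed intervals `[f (l ∘ jv), f (u ∘ jv)]`; in particular
the image is again a nonempty finite union of nonempty closed intervals
contained in `[0,1]`. -/
theorem union_aggregation_closed (n : ℕ) (f : (Fin n → ℝ) → ℝ)
    (hcont : ContinuousOn f (Set.pi Set.univ fun _ => Set.Icc (0 : ℝ) 1))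
    (hmono : ∀ x ∈ Set.pi Set.univ fun _ => Set.Icc (0 : ℝ) 1,
             ∀ y ∈ Set.pi Set.univ fun _ => Set.Icc (0 : ℝ) 1,
             x ≤ y → f x ≤ f y)
    (hrange : ∀ x ∈ Set.pi Set.univ fun _ => Set.Icc (0 : ℝ) 1,
              f x ∈ Set.Icc (0 : ℝ) 1)
    (J : Fin n → Type) [∀ i, Fintype (J i)] [∀ i, Nonempty (J i)]
    (l u : ∀ i, J i → ℝ)
    (hle : ∀ i j, l i j ≤ u i j)
    (hsub : ∀ i j, Set.Icc (l i j) (u i j) ⊆ Set.Icc (0 : ℝ) 1) :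
    f '' (Set.pi Set.univ fun i => ⋃ j : J i, Set.Icc (l i j) (u i j)) =
      (⋃ jv : ∀ i, J i,
        Set.Icc (f fun i => l i (jv i)) (f fun i => u i (jv i))) ∧
    (f '' (Set.pi Set.univ fun i => ⋃ j : J i, Set.Icc (l i j) (u i j))).Nonempty ∧
    f '' (Set.pi Set.univ fun i => ⋃ j : J i, Set.Icc (l i j) (u i j)) ⊆
      Set.Icc (0 : ℝ) 1 ∧
    ∀ jv : ∀ i, J i, (f fun i => l i (jv i)) ≤ (f fun i => u i (jv i)) := by
  set S : (∀ i, J i) → Set (Fin n → ℝ) :=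
    fun jv => Set.pi Set.univ fun i => Set.Icc (l i (jv i)) (u i (jv i)) with hS
  have hSsub : ∀ jv, S jv ⊆ Set.pi Set.univ fun _ => Set.Icc (0 : ℝ) 1 := by
    intro jv x hx i _
    exact hsub i (jv i) (hx i (Set.mem_univ i))
  have hlmem : ∀ jv, (fun i => l i (jv i)) ∈ S jv := by
    intro jv i _
    exact ⟨le_refl _, hle i (jv i)⟩
  have humem : ∀ jv, (fun i => u i (jv i)) ∈ S jv := by
    intro jv i _
    exact ⟨hle i (jv i), le_refl _⟩
  have himg : ∀ jv, f '' S jv =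
      Set.Icc (f fun i => l i (jv i)) (f fun i => u i (jv i)) := by
    intro jv
    apply Set.Subset.antisymm
    · rintro _ ⟨x, hx, rfl⟩
      constructor
      · exact hmono _ (hSsub jv (hlmem jv)) _ (hSsub jv hx)
          (fun i => (hx i (Set.mem_univ i)).1)
      · exact hmono _ (hSsub jv hx) _ (hSsub jv (humem jv))
          (fun i => (hx i (Set.mem_univ i)).2)
    · have hconv : Convex ℝ (S jv) := convex_pi fun i _ => convex_Icc _ _
      have hpre : IsPreconnected (f '' S jv) :=
        (hconv.isPreconnected).image f (hcont.mono (hSsub jv))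
      exact hpre.Icc_subset ⟨_, hlmem jv, rfl⟩ ⟨_, humem jv, rfl⟩
  have hpi : (Set.pi Set.univ fun i => ⋃ j : J i, Set.Icc (l i j) (u i j)) =
      ⋃ jv : ∀ i, J i, S jv := by
    rw [hS]
    exact (Set.iUnion_univ_pi _).symm
  have heq : f '' (Set.pi Set.univ fun i => ⋃ j : J i, Set.Icc (l i j) (u i j)) =
      ⋃ jv : ∀ i, J i,
        Set.Icc (f fun i => l i (jv i)) (f fun i => u i (jv i)) := by
    rw [hpi, Set.image_iUnion]
    exact Set.iUnion_congr himg
  refine ⟨heq, ?_, ?_, ?_⟩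
  · obtain ⟨jv⟩ : Nonempty (∀ i, J i) := inferInstance
    exact ⟨f (fun i => l i (jv i)), Set.mem_image_of_mem f (hpi ▸ Set.mem_iUnion.2 ⟨jv, hlmem jv⟩)⟩
  · rintro _ ⟨x, hx, rfl⟩
    refine hrange _ ?_
    rw [hpi] at hx
    obtain ⟨jv, hjv⟩ := Set.mem_iUnion.1 hx
    exact hSsub jv hjv
  · intro jv
    exact hmono _ (hSsub jv (hlmem jv)) _ (hSsub jv (humem jv))
      (fun i => hle i (jv i))
end
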